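/- arXiv:1606.01693 — 3 statements merged into one kernel-verified Lean document; each statement's English description precedes it below -/
import Mathlib

section
/- In a 3-connected planar graph with more than 6 vertices in which every 3-cut is trivial (i.e., isolates a single vertex of degree 3), no two vertices of degree 3 share an edge that lies on a triangle. -/
/-!
Let `a b` be adjacent degree-3 vertices with a common neighbour `c`. Apart from each other, `a`
and `b` have at most three neighbours (`c` and one more each), so this set `S` separates `{a, b}`
from the other (at least two) vertices. Since `G` is 3-connected, `|S| = 3`, so `S` is a 3-cut,
hence trivial: it is the neighbourhood of a vertex `x`, and `G - S - x` is connected. But `x` is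
neither `a` nor `b`, whose neighbours `b`, `a` are not in `S`, so `S ∪ {x}` still separates
`{a, b}` from the remaining vertices, which exist since `G` has more than six.
-/

open SimpleGraph Set

/-- A plane embedding of a simple graph: vertices are mapped to points of the plane,
edges to injective arcs, such that arcs meet only in common endpoints. -/
structure PlaneEmbedding {V : Type*} (G : SimpleGraph V) where
  vertexMap : V → ℝ × ℝ
  vertex_inj : Function.Injective vertexMap
  edgeMap : ∀ ⦃a b : V⦄, G.Adj a b → C(unitInterval, ℝ × ℝ)
  edge_start : ∀ ⦃a b : V⦄ (h : G.Adj a b), edgeMap h 0 = vertexMap a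
  edge_end : ∀ ⦃a b : V⦄ (h : G.Adj a b), edgeMap h 1 = vertexMap b
  edge_inj : ∀ ⦃a b : V⦄ (h : G.Adj a b), Function.Injective (edgeMap h)
  edge_symm : ∀ ⦃a b : V⦄ (h : G.Adj a b),
    Set.range (edgeMap h) = Set.range (edgeMap h.symm)
  edge_int : ∀ ⦃a b c d : V⦄ (h : G.Adj a b) (h' : G.Adj c d),
    s(a, b) ≠ s(c, d) →
    Set.range (edgeMap h) ∩ Set.range (edgeMap h') ⊆
      vertexMap '' (({a, b} : Set V) ∩ {c, d})
  edge_no_vertex : ∀ ⦃a b : V⦄ (h : G.Adj a b) (x : V),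
    vertexMap x ∈ Set.range (edgeMap h) → x = a ∨ x = b

variable {V : Type*}

/-- The subset of the plane covered by the drawing of the graph. -/
def PlaneEmbedding.drawing {G : SimpleGraph V} (E : PlaneEmbedding G) : Set (ℝ × ℝ) :=
  Set.range E.vertexMap ∪ ⋃ (a : V) (b : V) (h : G.Adj a b), Set.range (E.edgeMap h)

/-- A face of a plane embedding: a connected component of the complement of the drawing. -/
def PlaneEmbedding.IsFace {G : SimpleGraph V} (E : PlaneEmbedding G)
    (F : Set (ℝ × ℝ)) : Prop :=
  ∃ x ∈ E.drawingᶜ, F = connectedComponentIn E.drawingᶜ x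

/-- A face whose boundary is the union of the arcs of three mutually adjacent vertices. -/
def PlaneEmbedding.FaceIsTriangleOn {G : SimpleGraph V} (E : PlaneEmbedding G)
    (F : Set (ℝ × ℝ)) (a b c : V) : Prop :=
  ∃ (h1 : G.Adj a b) (h2 : G.Adj b c) (h3 : G.Adj c a),
    frontier F = Set.range (E.edgeMap h1) ∪ Set.range (E.edgeMap h2) ∪
      Set.range (E.edgeMap h3)

/-- A face of a plane embedding is a triangle if it is bounded by three arcs of a 3-cycle. -/
def PlaneEmbedding.FaceIsTriangle {G : SimpleGraph V} (E : PlaneEmbedding G)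
    (F : Set (ℝ × ℝ)) : Prop :=
  ∃ a b c : V, E.FaceIsTriangleOn F a b c

/-- `(a,b,c)` is a facial triangle of the embedding `E`. -/
def PlaneEmbedding.IsFacialTriangle {G : SimpleGraph V} (E : PlaneEmbedding G)
    (a b c : V) : Prop :=
  ∃ F : Set (ℝ × ℝ), E.IsFace F ∧ E.FaceIsTriangleOn F a b c

/-- A graph is planar if it admits a plane embedding. -/
def IsPlanar (G : SimpleGraph V) : Prop := Nonempty (PlaneEmbedding G)

/-- A graph is `k`-connected if it has more than `k` vertices and removing fewer than
`k` vertices always leaves a connected graph. -/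
def IsKConnected (k : ℕ) (G : SimpleGraph V) : Prop :=
  k < Nat.card V ∧ ∀ S : Set V, S.Finite → S.ncard < k → (G.induce Sᶜ).Connected

/-- A 3-cut: a set of 3 vertices whose removal disconnects the graph. -/
def IsThreeCut (G : SimpleGraph V) (S : Set V) : Prop :=
  S.ncard = 3 ∧ ¬ (G.induce Sᶜ).Preconnected

/-- `C` is (the vertex set of) a connected component of `G - S`. -/
def IsCompOf (G : SimpleGraph V) (S : Set V) (C : Set V) : Prop :=
  C.Nonempty ∧ C ⊆ Sᶜ ∧ (G.induce C).Connected ∧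
    ∀ a ∈ C, ∀ b ∈ Sᶜ, G.Adj a b → b ∈ C

/-- The edge closed component of `G - {u,v,w}` corresponding to the component `C`:
the graph induced on `C ∪ {u,v,w}` with the edges `uv`, `vw`, `wu` added. -/
def edgeClosedGraph (G : SimpleGraph V) (u v w : V) (C : Set V) :
    SimpleGraph ↥(C ∪ {u, v, w}) :=
  SimpleGraph.fromRel (fun a b =>
    G.Adj a b ∨ ((a : V) ∈ ({u, v, w} : Set V) ∧ (b : V) ∈ ({u, v, w} : Set V)))
/-- A trivial 3-cut: its removal leaves a single degree-3 vertex `x` whose neighbourhood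
is the cut, and the remaining vertices form one connected component. -/
def IsTrivialThreeCut (G : SimpleGraph V) (S : Set V) : Prop :=
  IsThreeCut G S ∧ ∃ x : V, x ∉ S ∧ G.neighborSet x = S ∧
    (G.induce (Sᶜ \ {x})).Connected

def SimpleGraph.outerBoundary (G : SimpleGraph V) (A : Set V) : Set V :=
  {v | v ∉ A ∧ ∃ u ∈ A, G.Adj u v}

namespace SimpleGraph

variable {G : SimpleGraph V}

lemma notMem_outerBoundary {A : Set V} {v : V} (hv : v ∈ A) : v ∉ G.outerBoundary A :=
  fun h => h.1 hv

lemma not_preconnected_induce_of_subset_compl_outerBoundary {A T : Set V} {a z : V}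
    (hT : T ⊆ (G.outerBoundary A)ᶜ) (ha : a ∈ T ∩ A) (hz : z ∈ T \ A) :
    ¬ (G.induce T).Preconnected := by
  intro hconn
  obtain ⟨p⟩ := hconn ⟨a, ha.1⟩ ⟨z, hz.1⟩
  obtain ⟨d, -, hfst, hsnd⟩ := p.exists_boundary_dart {x | (x : V) ∈ A} ha.2 hz.2
  exact hT d.snd.2 ⟨hsnd, d.fst, hfst, d.adj⟩

lemma notMem_of_neighborSet_eq_outerBoundary {A : Set V} {x : V}
    (hA : ∀ u ∈ A, ∃ v ∈ A, G.Adj u v) (hx : G.neighborSet x = G.outerBoundary A) :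
    x ∉ A := fun hxA => by
  obtain ⟨v, hvA, hxv⟩ := hA x hxA
  exact notMem_outerBoundary (G := G) hvA (hx ▸ hxv)

lemma outerBoundary_pair_subset {a b c : V} (hac : G.Adj a c) :
    G.outerBoundary {a, b} ⊆ (G.neighborSet a \ {b}) ∪ (G.neighborSet b \ {a, c}) := by
  rintro v ⟨hv, u, hu, huv⟩
  simp only [Set.mem_insert_iff, Set.mem_singleton_iff, not_or] at hv hu
  rcases hu with rfl | rfl
  · exact Or.inl ⟨huv, hv.2⟩
  · by_cases hvc : v = c
    · exact Or.inl ⟨hvc ▸ hac, hv.2⟩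
    · exact Or.inr ⟨huv, by simp [hv.1, hvc]⟩

lemma outerBoundary_pair_finite_and_ncard_le {a b c : V} (hab : G.Adj a b) (hbc : G.Adj b c)
    (hca : G.Adj c a) (ha : (G.neighborSet a).ncard = 3) (hb : (G.neighborSet b).ncard = 3) :
    (G.outerBoundary {a, b}).Finite ∧ (G.outerBoundary {a, b}).ncard ≤ 3 := by
  have hsub := outerBoundary_pair_subset (b := b) hca.symm
  have hfin : ((G.neighborSet a \ {b}) ∪ (G.neighborSet b \ {a, c})).Finite :=
    ((Set.finite_of_ncard_ne_zero (by omega)).sdiff).union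
      ((Set.finite_of_ncard_ne_zero (by omega)).sdiff)
  have hna : (G.neighborSet a \ {b}).ncard = 2 := by
    rw [Set.ncard_sdiff_singleton_of_mem (s := G.neighborSet a) hab, ha]
  have hnb : (G.neighborSet b \ {a, c}).ncard = 1 := by
    rw [Set.ncard_sdiff (t := G.neighborSet b) (Set.pair_subset hab.symm hbc), hb,
      Set.ncard_pair hca.ne.symm]
  refine ⟨hfin.subset hsub, (Set.ncard_le_ncard hsub hfin).trans ?_⟩
  exact (Set.ncard_union_le _ _).trans (by omega)

end SimpleGraph

lemma Set.exists_notMem_of_ncard_lt {s : Set V} (hs : s.ncard < Nat.card V) : ∃ z, z ∉ s :=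
  (Set.ne_univ_iff_exists_notMem s).1 fun h => by simp [h] at hs

theorem stmt0_general (G : SimpleGraph V)
    (h3 : IsKConnected 3 G) (hcard : 6 < Nat.card V)
    (htriv : ∀ S : Set V, IsThreeCut G S → IsTrivialThreeCut G S) :
    ¬ ∃ a b c : V, G.Adj a b ∧ G.Adj b c ∧ G.Adj c a ∧
      (G.neighborSet a).ncard = 3 ∧ (G.neighborSet b).ncard = 3 := by
  rintro ⟨a, b, c, hab, hbc, hca, ha, hb⟩
  obtain ⟨hSfin, hS⟩ := outerBoundary_pair_finite_and_ncard_le hab hbc hca ha hb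
  set S := G.outerBoundary {a, b}
  have haS : a ∉ S := notMem_outerBoundary (by simp)
  have hsep : ∀ T ⊆ Sᶜ, a ∈ T → ∀ z ∈ T, z ∉ ({a, b} : Set V) → ¬ (G.induce T).Preconnected :=
    fun T hT haT z hzT hz =>
      not_preconnected_induce_of_subset_compl_outerBoundary hT ⟨haT, by simp⟩ ⟨hzT, hz⟩
  have hcard_ab : (insert a (insert b S)).ncard ≤ 5 :=
    (Set.ncard_insert_le _ _).trans (by have := Set.ncard_insert_le b S; omega)
  obtain ⟨z, hz⟩ := Set.exists_notMem_of_ncard_lt (by omega : (insert a (insert b S)).ncard < _)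
  simp only [Set.mem_insert_iff, not_or] at hz
  have hzT : z ∈ Sᶜ := hz.2.2
  have hzab : z ∉ ({a, b} : Set V) := by simp [hz.1, hz.2.1]
  rcases hS.lt_or_eq with hlt | heq
  · exact hsep Sᶜ subset_rfl haS z hzT hzab (h3.2 S hSfin hlt).preconnected
  obtain ⟨-, x, -, hNx, hconn⟩ := htriv S ⟨heq, hsep Sᶜ subset_rfl haS z hzT hzab⟩
  have hx : x ∉ ({a, b} : Set V) := notMem_of_neighborSet_eq_outerBoundary
    (by rintro u (rfl | rfl) <;> [exact ⟨b, by simp, hab⟩; exact ⟨a, by simp, hab.symm⟩]) hNx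
  obtain ⟨w, hw⟩ := Set.exists_notMem_of_ncard_lt
    (by have := Set.ncard_insert_le x (insert a (insert b S)); omega :
      (insert x (insert a (insert b S))).ncard < _)
  simp only [Set.mem_insert_iff, not_or] at hw
  have hxa : a ≠ x := fun h => hx (h ▸ by simp)
  exact hsep (Sᶜ \ {x}) Set.sdiff_subset ⟨haS, hxa⟩ w ⟨hw.2.2.2, hw.1⟩
    (by simp [hw.2.1, hw.2.2.1]) hconn.preconnected

/-- In an essentially 4-connected polyhedron with more than 6 vertices, no two degree-3
vertices share an edge lying on a triangle. -/
theorem stmt0 [Fintype V] (G : SimpleGraph V)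
    (hP : IsPlanar G) (h3 : IsKConnected 3 G) (hcard : 6 < Nat.card V)
    (htriv : ∀ S : Set V, IsThreeCut G S → IsTrivialThreeCut G S) :
    ¬ ∃ a b c : V, G.Adj a b ∧ G.Adj b c ∧ G.Adj c a ∧
      (G.neighborSet a).ncard = 3 ∧ (G.neighborSet b).ncard = 3 :=
  stmt0_general G h3 hcard htriv
end

section
/- Let G be a 3-connected planar graph, {u,v,w} a 3-cut in G, and G' an edge closed component of G - {u,v,w}. For any two vertices a, b of G' that are not both in {u,v,w}, the maximum number of internally vertex-disjoint a-b paths in G' is at least the maximum number of internally vertex-disjoint a-b paths in G. -/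
open SimpleGraph Set

variable {V : Type*}

/-- There exist `n` pairwise internally vertex-disjoint `a`-`b` paths in `G`. -/
def HasDisjointPaths (G : SimpleGraph V) (a b : V) (n : ℕ) : Prop :=
  ∃ P : Fin n → G.Path a b, ∀ i j, i ≠ j → ∀ x : V,
    x ∈ (P i : G.Walk a b).support → x ∈ (P j : G.Walk a b).support → x = a ∨ x = b

section Shortcut

variable {G : SimpleGraph V} {U S : Set V} {H : SimpleGraph U}

/- A `G`-walk between vertices of `U` is shortcut into `H`: an excursion outside `U` leaves
and re-enters through `S`, and is replaced by the `H`-edge between those two vertices of `S`.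
In the auxiliary form, `x` is the last vertex of `U` reached, still waiting for the walk
`p` to come back to `U` unless `p` starts at `x`. -/
theorem exists_walk_map_support_subset_aux
    (hG : ∀ x y : U, G.Adj x y → H.Adj x y)
    (hS : ∀ x y : U, (x : V) ∈ S → (y : V) ∈ S → x ≠ y → H.Adj x y)
    (hout : ∀ x y : V, x ∈ U → y ∉ U → G.Adj x y → x ∈ S)
    {y b : V} (p : G.Walk y b) (hb : b ∈ U) (x : U) (hx : y = x ∨ y ∉ U ∧ (x : V) ∈ S) :
    ∃ q : H.Walk x ⟨b, hb⟩, q.support.map Subtype.val ⊆ (x : V) :: p.support := by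
  induction p generalizing x with
  | nil =>
    rcases hx with rfl | ⟨hyU, -⟩
    · exact ⟨Walk.nil, by simp⟩
    · exact absurd hb hyU
  | @cons y y' b h p ih =>
    have hy'p : y' ∈ p.support := p.start_mem_support
    have htail : p.support ⊆ (x : V) :: (Walk.cons h p).support :=
      List.Subset.trans (List.subset_cons_self _ _) (List.subset_cons_self _ _)
    have stay : ∀ q : H.Walk x ⟨b, hb⟩, q.support.map Subtype.val ⊆ (x : V) :: p.support →
        q.support.map Subtype.val ⊆ (x : V) :: (Walk.cons h p).support := fun q hq =>
      List.Subset.trans hq (List.cons_subset.mpr ⟨List.mem_cons_self, htail⟩)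
    have jump : ∀ (y'' : U) (e : H.Adj x y''), (y'' : V) = y' →
        ∀ q : H.Walk y'' ⟨b, hb⟩, q.support.map Subtype.val ⊆ (y'' : V) :: p.support →
        (Walk.cons e q).support.map Subtype.val ⊆ (x : V) :: (Walk.cons h p).support := by
      rintro y'' e rfl q hq
      simp only [Walk.support_cons, List.map_cons, List.cons_subset]
      exact ⟨List.mem_cons_self,
        List.Subset.trans hq (List.cons_subset.mpr ⟨htail hy'p, htail⟩)⟩
    by_cases hy' : y' ∈ U
    · rcases hx with hyx | ⟨hyU, hxS⟩
      · obtain ⟨q, hq⟩ := ih hb ⟨y', hy'⟩ (Or.inl rfl)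
        exact ⟨.cons (hG x ⟨y', hy'⟩ (hyx ▸ h)) q, jump _ _ rfl q hq⟩
      · by_cases hxy' : x = ⟨y', hy'⟩
        · obtain ⟨q, hq⟩ := ih hb x (Or.inl (by rw [hxy']))
          exact ⟨q, stay q hq⟩
        · have hy'S : y' ∈ S := hout y' y hy' hyU h.symm
          obtain ⟨q, hq⟩ := ih hb ⟨y', hy'⟩ (Or.inl rfl)
          exact ⟨.cons (hS x ⟨y', hy'⟩ hxS hy'S hxy') q, jump _ _ rfl q hq⟩
    · have hxS : (x : V) ∈ S := by
        rcases hx with hyx | ⟨-, hxS⟩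
        · exact hout x y' x.2 hy' (hyx ▸ h)
        · exact hxS
      obtain ⟨q, hq⟩ := ih hb x (Or.inr ⟨hy', hxS⟩)
      exact ⟨q, stay q hq⟩

theorem exists_walk_map_support_subset
    (hG : ∀ x y : U, G.Adj x y → H.Adj x y)
    (hS : ∀ x y : U, (x : V) ∈ S → (y : V) ∈ S → x ≠ y → H.Adj x y)
    (hout : ∀ x y : V, x ∈ U → y ∉ U → G.Adj x y → x ∈ S)
    (a b : U) (p : G.Walk a b) :
    ∃ q : H.Walk a b, q.support.map Subtype.val ⊆ p.support := by
  obtain ⟨q, hq⟩ := exists_walk_map_support_subset_aux hG hS hout p b.2 a (Or.inl rfl)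
  exact ⟨q, List.Subset.trans hq
    (List.cons_subset.mpr ⟨p.start_mem_support, List.Subset.refl _⟩)⟩

end Shortcut

theorem HasDisjointPaths.of_walk_support_subset {W : Type*} {G : SimpleGraph V}
    {H : SimpleGraph W} {f : W → V} (hf : Function.Injective f) {a b : W}
    (hwalk : ∀ p : G.Walk (f a) (f b), ∃ q : H.Walk a b, q.support.map f ⊆ p.support)
    {n : ℕ} (hn : HasDisjointPaths G (f a) (f b) n) : HasDisjointPaths H a b n := by
  classical
  obtain ⟨P, hP⟩ := hn
  choose q hq using fun i => hwalk (P i)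
  have hsupp : ∀ i, ∀ x ∈ ((q i).toPath : H.Walk a b).support,
      f x ∈ (P i : G.Walk (f a) (f b)).support :=
    fun i x hx => hq i (List.mem_map_of_mem ((q i).support_toPath_subset_support hx))
  refine ⟨fun i => (q i).toPath, fun i j hij x hxi hxj => ?_⟩
  exact (hP i j hij (f x) (hsupp i x hxi) (hsupp j x hxj)).imp (@hf _ _) (@hf _ _)

theorem exists_edgeClosedGraph_walk_map_support_subset {G : SimpleGraph V} {u v w : V}
    {C : Set V} (hC : IsCompOf G {u, v, w} C) (a b : ↥(C ∪ {u, v, w})) (p : G.Walk a b) :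
    ∃ q : (edgeClosedGraph G u v w C).Walk a b, q.support.map Subtype.val ⊆ p.support := by
  refine exists_walk_map_support_subset (S := {u, v, w}) ?_ ?_ ?_ a b p
  · exact fun x y hxy => ⟨fun h => hxy.ne (congrArg Subtype.val h), Or.inl (Or.inl hxy)⟩
  · exact fun x y hx hy hxy => ⟨hxy, Or.inl (Or.inr ⟨hx, hy⟩)⟩
  · intro x y hx hy hxy
    refine hx.resolve_left fun hxC => hy (Or.inl (hC.2.2.2 x hxC y ?_ hxy))
    exact fun hyS => hy (Or.inr hyS)

theorem stmt5_general (G : SimpleGraph V)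
    (u v w : V)
    (C : Set V) (hC : IsCompOf G {u, v, w} C)
    (a b : ↥(C ∪ {u, v, w}))
    (n : ℕ) (hn : HasDisjointPaths G (a : V) (b : V) n) :
    HasDisjointPaths (edgeClosedGraph G u v w C) a b n :=
  hn.of_walk_support_subset Subtype.val_injective
    (exists_edgeClosedGraph_walk_map_support_subset hC a b)

/-- For vertices of an edge closed component not both in the cut, the maximum number of
internally disjoint paths between them in the component is at least that in `G`. -/
theorem stmt5 [Fintype V] (G : SimpleGraph V)
    (hP : IsPlanar G) (h3 : IsKConnected 3 G)
    (u v w : V) (hcut : IsThreeCut G {u, v, w})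
    (C : Set V) (hC : IsCompOf G {u, v, w} C)
    (a b : ↥(C ∪ {u, v, w}))
    (hab : ¬ ((a : V) ∈ ({u, v, w} : Set V) ∧ (b : V) ∈ ({u, v, w} : Set V)))
    (n : ℕ) (hn : HasDisjointPaths G (a : V) (b : V) n) :
    HasDisjointPaths (edgeClosedGraph G u v w C) a b n :=
  stmt5_general G u v w C hC a b n hn
end

section
/- Let G be a 3-connected planar graph, {u,v,w} a 3-cut in G, and G' an edge closed component of G - {u,v,w}. Then every 3-cut of G' is also a 3-cut of G. -/
open SimpleGraph Set

variable {V : Type*}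

/-
A walk of `G` avoiding `S` can only leave `C ∪ {u, v, w}` through one of `u, v, w`
and can only come back through one of them, because `C` is a component of `G - {u, v, w}`.
Contracting every vertex outside `C ∪ {u, v, w}` onto a vertex of `{u, v, w}` not in `S` therefore
turns it into a walk of the edge closed component avoiding `S`, the triangle `uvw` replacing each
excursion; if every vertex of `{u, v, w}` lies in `S`, such a walk never leaves `C` at all.
Hence if `G - S` is connected, so is `G' - S`.
-/

namespace SimpleGraph

variable {W : Type*} {G : SimpleGraph V} {H : SimpleGraph W}

lemma Reachable.map_of_eq_or_adj {φ : V → W}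
    (hφ : ∀ ⦃x y⦄, G.Adj x y → φ x = φ y ∨ H.Adj (φ x) (φ y)) {x y : V}
    (h : G.Reachable x y) : H.Reachable (φ x) (φ y) := by
  obtain ⟨p⟩ := h
  induction p with
  | nil => rfl
  | cons hxz _ ih =>
    rcases hφ hxz with heq | hadj
    · exact heq ▸ ih
    · exact hadj.reachable.trans ih

end SimpleGraph

lemma IsCompOf.mem_union_of_adj {G : SimpleGraph V} {S C : Set V} (hC : IsCompOf G S C)
    {a b : V} (ha : a ∈ C) (hab : G.Adj a b) : b ∈ C ∪ S := by
  by_cases hb : b ∈ S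
  · exact Or.inr hb
  · exact Or.inl (hC.2.2.2 a ha b hb hab)

section edgeClosedGraph

variable {G : SimpleGraph V} {u v w : V} {C : Set V}

lemma edgeClosedGraph_adj_of_adj {a b : ↥(C ∪ {u, v, w})} (h : G.Adj a b) :
    (edgeClosedGraph G u v w C).Adj a b :=
  ⟨fun hab => h.ne (congrArg Subtype.val hab), Or.inl (Or.inl h)⟩

lemma edgeClosedGraph_eq_or_adj {a b : ↥(C ∪ {u, v, w})}
    (ha : (a : V) ∈ ({u, v, w} : Set V)) (hb : (b : V) ∈ ({u, v, w} : Set V)) :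
    a = b ∨ (edgeClosedGraph G u v w C).Adj a b := by
  by_cases hab : a = b
  · exact Or.inl hab
  · exact Or.inr ⟨hab, Or.inl (Or.inr ⟨ha, hb⟩)⟩

variable (S : Set ↥(C ∪ {u, v, w}))

open Classical in
noncomputable def contractOutside (a : ↥(Sᶜ : Set ↥(C ∪ {u, v, w})))
    (x : ↥((Subtype.val '' S)ᶜ : Set V)) : ↥(Sᶜ : Set ↥(C ∪ {u, v, w})) :=
  if hx : (x : V) ∈ C ∪ {u, v, w} then ⟨⟨x, hx⟩, fun hs => x.2 ⟨_, hs, rfl⟩⟩ else a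

variable {S} {a : ↥(Sᶜ : Set ↥(C ∪ {u, v, w}))} {x y : ↥((Subtype.val '' S)ᶜ : Set V)}

lemma contractOutside_of_mem (hx : (x : V) ∈ C ∪ {u, v, w}) :
    ((contractOutside S a x : ↥(C ∪ {u, v, w})) : V) = x := by
  simp only [contractOutside, dif_pos hx]

lemma contractOutside_of_notMem (hx : (x : V) ∉ C ∪ {u, v, w}) : contractOutside S a x = a :=
  dif_neg hx

lemma contractOutside_surjective : Function.Surjective (contractOutside S a) := fun r =>
  ⟨⟨r.1.1, fun ⟨_, hs, hsr⟩ => r.2 (Subtype.ext hsr ▸ hs)⟩,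
    Subtype.ext (Subtype.ext (contractOutside_of_mem r.1.2))⟩

/-- An edge leaving `C ∪ {u, v, w}` starts at a surviving vertex of `{u, v, w}`, which is why the
target `a` has to lie in `{u, v, w}` as soon as such a vertex exists. -/
lemma contractOutside_eq_or_adj (hC : IsCompOf G {u, v, w} C)
    (ha : ∀ b : ↥(Sᶜ : Set ↥(C ∪ {u, v, w})),
      (b.1 : V) ∈ ({u, v, w} : Set V) → (a.1 : V) ∈ ({u, v, w} : Set V))
    (hxy : G.Adj x y) :
    contractOutside S a x = contractOutside S a y ∨
      ((edgeClosedGraph G u v w C).induce Sᶜ).Adj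
        (contractOutside S a x) (contractOutside S a y) := by
  have cross : ∀ ⦃x y : ↥((Subtype.val '' S)ᶜ : Set V)⦄, G.Adj x y →
      (x : V) ∈ C ∪ {u, v, w} → (y : V) ∉ C ∪ {u, v, w} →
      contractOutside S a x = a ∨
        ((edgeClosedGraph G u v w C).induce Sᶜ).Adj (contractOutside S a x) a := by
    intro x y hxy hx hy
    have hxuvw : ((contractOutside S a x : ↥(C ∪ {u, v, w})) : V) ∈ ({u, v, w} : Set V) := by
      rw [contractOutside_of_mem hx]
      exact hx.resolve_left fun hxC => hy (hC.mem_union_of_adj hxC hxy)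
    exact (edgeClosedGraph_eq_or_adj hxuvw (ha _ hxuvw)).imp_left Subtype.ext
  by_cases hx : (x : V) ∈ C ∪ {u, v, w} <;> by_cases hy : (y : V) ∈ C ∪ {u, v, w}
  · refine Or.inr (induce_adj.2 (edgeClosedGraph_adj_of_adj ?_))
    rwa [contractOutside_of_mem hx, contractOutside_of_mem hy]
  · rw [contractOutside_of_notMem hy]
    exact cross hxy hx hy
  · rw [contractOutside_of_notMem hx, eq_comm, adj_comm]
    exact cross hxy.symm hy hx
  · rw [contractOutside_of_notMem hx, contractOutside_of_notMem hy]
    exact Or.inl rfl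

lemma preconnected_edgeClosedGraph_induce (hC : IsCompOf G {u, v, w} C)
    (hpre : (G.induce (Subtype.val '' S)ᶜ).Preconnected) :
    ((edgeClosedGraph G u v w C).induce Sᶜ).Preconnected := by
  intro p q
  obtain ⟨a, ha⟩ : ∃ a : ↥(Sᶜ : Set ↥(C ∪ {u, v, w})),
      ∀ b : ↥(Sᶜ : Set ↥(C ∪ {u, v, w})),
        (b.1 : V) ∈ ({u, v, w} : Set V) → (a.1 : V) ∈ ({u, v, w} : Set V) := by
    by_cases h : ∃ b : ↥(Sᶜ : Set ↥(C ∪ {u, v, w})), (b.1 : V) ∈ ({u, v, w} : Set V)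
    · obtain ⟨b, hb⟩ := h
      exact ⟨b, fun _ _ => hb⟩
    · exact ⟨p, fun b hb => (h ⟨b, hb⟩).elim⟩
  obtain ⟨x, rfl⟩ := contractOutside_surjective (a := a) p
  obtain ⟨y, rfl⟩ := contractOutside_surjective (a := a) q
  exact (hpre x y).map_of_eq_or_adj fun _ _ hxy => contractOutside_eq_or_adj hC ha hxy

end edgeClosedGraph

theorem stmt6_general (G : SimpleGraph V)
    (u v w : V)
    (C : Set V) (hC : IsCompOf G {u, v, w} C)
    (S : Set ↥(C ∪ {u, v, w}))
    (hS : IsThreeCut (edgeClosedGraph G u v w C) S) :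
    IsThreeCut G (Subtype.val '' S) :=
  ⟨(Set.ncard_image_of_injective S Subtype.val_injective).trans hS.1,
    mt (preconnected_edgeClosedGraph_induce hC) hS.2⟩

/-- Every 3-cut of an edge closed component of a 3-cut of `G` is also a 3-cut of `G`. -/
theorem stmt6 [Fintype V] (G : SimpleGraph V)
    (hP : IsPlanar G) (h3 : IsKConnected 3 G)
    (u v w : V) (hcut : IsThreeCut G {u, v, w})
    (C : Set V) (hC : IsCompOf G {u, v, w} C)
    (S : Set ↥(C ∪ {u, v, w}))
    (hS : IsThreeCut (edgeClosedGraph G u v w C) S) :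
    IsThreeCut G (Subtype.val '' S) :=
  stmt6_general G u v w C hC S hS
end
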